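/- arXiv:2310.08709 — 5 statements merged into one kernel-verified Lean document; each statement's English description precedes it below -/
import Mathlib

section
/- Let n ≥ 3 be an odd integer and let Z_n = {x_1,…,x_{n+1}} be the Reuleaux pyramid vertex set. Then Z_n is extremal: all pairwise distances are at most 1, and the number of unordered pairs {i,j} with 1 ≤ i < j ≤ n+1 and |x_i − x_j| = 1 is exactly 2n = 2(n+1) − 2. -/
/-! The base vertices lie on a circle of radius `r = 1 / (2 cos (π / 2n))` and the apex at height
`√(1 - r²)`, so the apex is at distance one from every base vertex. The chord between base
vertices whose indices differ by `d` has length `sin (π d / n) / cos (π / 2n)`. For `n = 2m + 1`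
we have `cos (π / 2n) = sin (π m / n)`, so monotonicity of `sin` on `[0, π/2]` together with
`sin (π - t) = sin t` bounds every chord by one, with equality exactly for `d ∈ {m, m + 1}`.
This gives `n` diametric pairs through the apex and `(m + 1) + m = n` among the base vertices. -/

open Real MeasureTheory Metric

noncomputable def pt (a b c : ℝ) : EuclideanSpace ℝ (Fin 3) :=
  (EuclideanSpace.equiv (Fin 3) ℝ).symm ![a, b, c]

open Finset

lemma dist_pt (a b c a' b' c' : ℝ) :
    dist (pt a b c) (pt a' b' c') = √((a - a') ^ 2 + (b - b') ^ 2 + (c - c') ^ 2) := by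
  simp [pt, EuclideanSpace.dist_eq, Fin.sum_univ_three, Real.dist_eq, sq_abs]

lemma dist_pt_circle (α β r z : ℝ) :
    dist (pt (cos α / r) (sin α / r) z) (pt (cos β / r) (sin β / r) z)
      = 2 * |sin ((α - β) / 2)| / |r| := by
  have chord : (cos α / r - cos β / r) ^ 2 + (sin α / r - sin β / r) ^ 2 + (z - z) ^ 2
      = (2 * sin ((α - β) / 2) / r) ^ 2 := by
    rw [← sub_div, ← sub_div, cos_sub_cos, sin_sub_sin]
    linear_combination (4 * sin ((α - β) / 2) ^ 2 / r ^ 2) * sin_sq_add_cos_sq ((α + β) / 2)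
  rw [dist_pt, chord, sqrt_sq_eq_abs, abs_div, abs_mul, abs_two]

lemma dist_pt_circle_apex (α r : ℝ) (hr : 1 ≤ r) :
    dist (pt (cos α / r) (sin α / r) 0) (pt 0 0 √(1 - (r⁻¹) ^ 2)) = 1 := by
  have hr' : (r⁻¹) ^ 2 ≤ 1 := pow_le_one₀ (by positivity) (inv_le_one_of_one_le₀ hr)
  rw [dist_pt, zero_sub, neg_sq, sq_sqrt (by linarith), div_eq_inv_mul, div_eq_inv_mul]
  rw [← sqrt_one]
  congr 1
  linear_combination (r⁻¹) ^ 2 * sin_sq_add_cos_sq α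

noncomputable def reuleauxBase (n j : ℕ) : EuclideanSpace ℝ (Fin 3) :=
  pt (cos (2 * π * j / n) / (2 * cos (π / (2 * n))))
    (sin (2 * π * j / n) / (2 * cos (π / (2 * n)))) 0

noncomputable def reuleauxApex (n : ℕ) : EuclideanSpace ℝ (Fin 3) :=
  pt 0 0 √(1 - ((2 * cos (π / (2 * n)))⁻¹) ^ 2)

lemma cos_pi_div_two_mul_nonneg (n : ℕ) : 0 ≤ cos (π / (2 * n)) := by
  apply cos_nonneg_of_mem_Icc
  constructor
  · have := pi_pos; linarith [show 0 ≤ π / (2 * n) by positivity]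
  · rcases Nat.eq_zero_or_pos n with rfl | hn
    · simp; positivity
    · rw [div_le_div_iff_of_pos_left pi_pos (by positivity) two_pos]
      have : (1 : ℝ) ≤ n := by exact_mod_cast hn
      linarith

lemma one_le_two_mul_cos_pi_div_two_mul {n : ℕ} (hn : 2 ≤ n) :
    1 ≤ 2 * cos (π / (2 * n)) := by
  have hn' : (2 : ℝ) ≤ n := by exact_mod_cast hn
  have h : π / (2 * n) ≤ π / 3 :=
    div_le_div_of_nonneg_left pi_pos.le (by norm_num) (by linarith)
  have := cos_le_cos_of_nonneg_of_le_pi (by positivity) (by linarith [pi_pos]) h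
  rw [cos_pi_div_three] at this
  linarith

lemma dist_reuleauxBase_reuleauxApex {n : ℕ} (hn : 2 ≤ n) (j : ℕ) :
    dist (reuleauxBase n j) (reuleauxApex n) = 1 :=
  dist_pt_circle_apex _ _ (one_le_two_mul_cos_pi_div_two_mul hn)

lemma dist_reuleauxBase_add {n i d : ℕ} (h : i + d ≤ n) :
    dist (reuleauxBase n i) (reuleauxBase n (i + d)) = sin (π * d / n) / cos (π / (2 * n)) := by
  have hsin : 0 ≤ sin (π * d / n) := by
    apply sin_nonneg_of_nonneg_of_le_pi (by positivity)
    rcases Nat.eq_zero_or_pos n with rfl | hn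
    · simp [pi_pos.le]
    · rw [div_le_iff₀ (by positivity)]
      have : (d : ℝ) ≤ n := by exact_mod_cast (by omega : d ≤ n)
      nlinarith [pi_pos]
  have hc : 0 ≤ 2 * cos (π / (2 * n)) := by linarith [cos_pi_div_two_mul_nonneg n]
  have hangle : (2 * π * i / n - 2 * π * (i + d : ℕ) / n) / 2 = -(π * d / n) := by
    push_cast; ring
  rw [reuleauxBase, reuleauxBase, dist_pt_circle, hangle, sin_neg, abs_neg, abs_of_nonneg hsin,
    abs_of_nonneg hc, mul_div_mul_left _ _ two_ne_zero]

lemma sin_pi_mul_div_le_cos_of_le {n m d : ℕ} (hm : n = 2 * m + 1) (hd : d ≤ m) :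
    sin (π * d / n) ≤ cos (π / (2 * n)) ∧
      (sin (π * d / n) = cos (π / (2 * n)) ↔ d = m) := by
  have hn : (0 : ℝ) < n := by rw [hm]; positivity
  have hmn : (2 * m + 1 : ℝ) = n := by rw [hm]; push_cast; ring
  have hcos : cos (π / (2 * n)) = sin (π * m / n) := by
    rw [← sin_pi_div_two_sub, ← hmn]
    congr 1
    field_simp
    ring
  have mem : ∀ k : ℕ, k ≤ m → π * k / n ∈ Set.Icc (-(π / 2)) (π / 2) := fun k hk => by
    have hk : (k : ℝ) ≤ m := by exact_mod_cast hk
    constructor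
    · linarith [show 0 ≤ π * k / n by positivity, pi_pos]
    · rw [div_le_iff₀ hn]; nlinarith [pi_pos]
  rw [hcos, strictMonoOn_sin.le_iff_le (mem d hd) (mem m le_rfl),
    strictMonoOn_sin.injOn.eq_iff (mem d hd) (mem m le_rfl)]
  constructor
  · gcongr
  · rw [div_left_inj' hn.ne', mul_right_inj' pi_pos.ne', Nat.cast_inj]

lemma sin_pi_mul_div_le_cos {n m d : ℕ} (hm : n = 2 * m + 1) (hd : d ≤ n) :
    sin (π * d / n) ≤ cos (π / (2 * n)) ∧
      (sin (π * d / n) = cos (π / (2 * n)) ↔ d = m ∨ d = m + 1) := by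
  rcases le_or_gt d m with hdm | hdm
  · obtain ⟨hle, heq⟩ := sin_pi_mul_div_le_cos_of_le hm hdm
    exact ⟨hle, heq.trans (by omega)⟩
  · have hsymm : sin (π * d / n) = sin (π * (n - d : ℕ) / n) := by
      rw [← sin_pi_sub]
      congr 1
      have hn : (n : ℝ) ≠ 0 := by rw [hm]; positivity
      field_simp
      push_cast [hd]
      ring
    rw [hsymm]
    obtain ⟨hle, heq⟩ := sin_pi_mul_div_le_cos_of_le hm (d := n - d) (by omega)
    exact ⟨hle, heq.trans (by omega)⟩

lemma dist_reuleauxBase_add_le_one {n m i d : ℕ} (hm : n = 2 * m + 1) (h : i + d ≤ n) :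
    dist (reuleauxBase n i) (reuleauxBase n (i + d)) ≤ 1 := by
  rw [dist_reuleauxBase_add h]
  exact div_le_one_of_le₀ (sin_pi_mul_div_le_cos hm (by omega)).1 (cos_pi_div_two_mul_nonneg n)

lemma dist_reuleauxBase_add_eq_one_iff {n m i d : ℕ} (hm : n = 2 * m + 1) (hm1 : 1 ≤ m)
    (h : i + d ≤ n) :
    dist (reuleauxBase n i) (reuleauxBase n (i + d)) = 1 ↔ d = m ∨ d = m + 1 := by
  have hc : cos (π / (2 * n)) ≠ 0 := by
    linarith [one_le_two_mul_cos_pi_div_two_mul (n := n) (by omega)]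
  rw [dist_reuleauxBase_add h, div_eq_one_iff_eq hc]
  exact (sin_pi_mul_div_le_cos hm (by omega)).2

lemma card_diametric_pairs {n m : ℕ} (hm : n = 2 * m + 1) (hm1 : 1 ≤ m) :
    #{p ∈ Icc 1 (n + 1) ×ˢ Icc 1 (n + 1) |
      p.1 < p.2 ∧ (p.2 = n + 1 ∨ p.2 ≤ n ∧ (p.2 = p.1 + m ∨ p.2 = p.1 + m + 1))} =
      2 * n := by
  have hsplit : {p ∈ Icc 1 (n + 1) ×ˢ Icc 1 (n + 1) |
      p.1 < p.2 ∧ (p.2 = n + 1 ∨ p.2 ≤ n ∧ (p.2 = p.1 + m ∨ p.2 = p.1 + m + 1))} =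
      ((Icc 1 n).image fun i => (i, n + 1)) ∪ ((Icc 1 (m + 1)).image fun i => (i, i + m)) ∪
        ((Icc 1 m).image fun i => (i, i + m + 1)) := by
    ext ⟨i, j⟩
    simp only [mem_filter, mem_product, mem_Icc, mem_union, mem_image, Prod.mk.injEq, existsAndEq,
      true_and]
    omega
  have hinj : ∀ f : ℕ → ℕ, Function.Injective fun i => (i, f i) := fun f _ _ h =>
    congrArg Prod.fst h
  rw [hsplit, card_union_of_disjoint, card_union_of_disjoint,
    card_image_of_injective _ (hinj _), card_image_of_injective _ (hinj _),
    card_image_of_injective _ (hinj fun i => i + m + 1)]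
  · simp only [Nat.card_Icc]; omega
  all_goals
    simp only [disjoint_left, mem_union, mem_image, mem_Icc, Prod.forall, Prod.mk.injEq]
    omega

/-- The Reuleaux pyramid vertex set $Z_n$ is extremal. -/
theorem stmt_0 (n : ℕ) (hn : 3 ≤ n) (hodd : Odd n)
    (x : ℕ → EuclideanSpace ℝ (Fin 3))
    (hbase : ∀ j, 1 ≤ j → j ≤ n →
      x j = pt (Real.cos (2 * π * j / n) / (2 * Real.cos (π / (2 * n))))
               (Real.sin (2 * π * j / n) / (2 * Real.cos (π / (2 * n)))) 0)
    (hapex : x (n + 1) = pt 0 0 (Real.sqrt (1 - ((2 * Real.cos (π / (2 * n)))⁻¹) ^ 2))) :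
    (∀ i j, 1 ≤ i → i ≤ n + 1 → 1 ≤ j → j ≤ n + 1 → dist (x i) (x j) ≤ 1) ∧
    ((Finset.Icc 1 (n + 1) ×ˢ Finset.Icc 1 (n + 1)).filter
        (fun p => p.1 < p.2 ∧ dist (x p.1) (x p.2) = 1)).card = 2 * n := by
  obtain ⟨m, hm⟩ := hodd
  have hm1 : 1 ≤ m := by omega
  have hbase' : ∀ j, 1 ≤ j → j ≤ n → x j = reuleauxBase n j := hbase
  have hapex' : x (n + 1) = reuleauxApex n := hapex
  have hdist : ∀ i j, 1 ≤ i → i < j → j ≤ n + 1 → dist (x i) (x j) ≤ 1 ∧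
      (dist (x i) (x j) = 1 ↔ j = n + 1 ∨ j ≤ n ∧ (j = i + m ∨ j = i + m + 1)) := by
    intro i j hi hij hj
    obtain ⟨d, rfl⟩ := Nat.exists_eq_add_of_lt hij
    rcases hj.lt_or_eq with hj | hj
    · rw [hbase' i hi (by omega), hbase' _ (by omega) (by omega), add_assoc,
        dist_reuleauxBase_add_eq_one_iff hm hm1 (by omega)]
      exact ⟨dist_reuleauxBase_add_le_one hm (by omega), by omega⟩
    · rw [hj, hbase' i hi (by omega), hapex', dist_reuleauxBase_reuleauxApex (by omega)]
      simp
  refine ⟨fun i j hi hi' hj hj' => ?_, ?_⟩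
  · rcases lt_trichotomy i j with h | rfl | h
    · exact (hdist i j hi h hj').1
    · simp
    · exact dist_comm (x i) (x j) ▸ (hdist j i hj h hi').1
  · rw [← card_diametric_pairs hm hm1]
    congr 1
    refine filter_congr fun p hp => ?_
    simp only [mem_product, mem_Icc] at hp
    exact and_congr_right fun h => (hdist p.1 p.2 hp.1.1 h hp.2.2).2
end

section
/- Let n ≥ 3 be an odd integer, t ∈ (0,1), and let {x_1,…,x_{2n+1}} be the elongated pyramid vertex set with parameter t. Then this set is extremal: all pairwise distances are at most 1, and the number of unordered pairs {i,j} with 1 ≤ i < j ≤ 2n+1 and |x_i − x_j| = 1 is exactly 4n = 2(2n+1) − 2. -/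
open Real MeasureTheory Metric

/-!
Write `n = 2m + 1`, `c = cos (π / n)` and `ρ = 1 / (2 cos (π / 2n))`, so that `ρ² (2 + 2c) = 1`.
In cylindrical coordinates the base vertices are `(ρ, 2πj/n, 0)`, the middle ones `(tρ, 2πj/n, -α)`
and the apex `(0, 0, β)`, and a squared distance is `r² + r'² - 2 r r' cos Δθ + Δz²`. Since `n` is
odd, `cos (2πk/n) ≥ cos (2πm/n) = -c`, with equality iff `k ≡ ±m (mod n)`. With the chosen `α`
and `β` this makes base–base and base–middle distances at most `1`, with equality exactly between
`j` and `j ± m`; every middle vertex is at distance `1` from the apex; all other distances are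
`< 1`. In the graph of diametric pairs a base vertex therefore has degree `4`, a middle vertex
degree `3` and the apex degree `n`, so twice the number of diametric pairs is `4n + 3n + n`.
-/

open Finset

lemma dist_pt_sq (a b c a' b' c' : ℝ) :
    dist (pt a b c) (pt a' b' c') ^ 2 = (a - a') ^ 2 + (b - b') ^ 2 + (c - c') ^ 2 := by
  rw [EuclideanSpace.dist_eq, sq_sqrt (by positivity)]
  simp [pt, Fin.sum_univ_three, Real.dist_eq, sq_abs]

noncomputable def cyl (r θ z : ℝ) : EuclideanSpace ℝ (Fin 3) := pt (r * cos θ) (r * sin θ) z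

lemma dist_cyl_sq (r θ z r' θ' z' : ℝ) :
    dist (cyl r θ z) (cyl r' θ' z') ^ 2 =
      r ^ 2 + r' ^ 2 - 2 * r * r' * cos (θ - θ') + (z - z') ^ 2 := by
  rw [cyl, cyl, dist_pt_sq, cos_sub]
  linear_combination r ^ 2 * sin_sq_add_cos_sq θ + r' ^ 2 * sin_sq_add_cos_sq θ'

lemma smul_cyl_sub_smul_pt (s a r θ : ℝ) :
    s • cyl r θ 0 - a • pt 0 0 1 = cyl (s * r) θ (-a) := by
  ext i
  fin_cases i <;> simp [cyl, pt] <;> ring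

lemma two_mul_cos_half_sq (x : ℝ) : (2 * cos (x / 2)) ^ 2 = 2 + 2 * cos x := by
  rw [mul_pow, cos_sq, mul_div_cancel₀ _ two_ne_zero]
  ring

lemma cos_pi_div_pos {n : ℕ} (hn : 3 ≤ n) : 0 < cos (π / n) := by
  have hn' : (3 : ℝ) ≤ n := by exact_mod_cast hn
  apply cos_pos_of_mem_Ioo
  constructor
  · have : 0 < π / n := by positivity
    linarith [pi_pos]
  · rw [div_lt_div_iff₀ (by positivity) two_pos]
    nlinarith [pi_pos]

lemma cos_two_pi_mul_div_congr (n : ℕ) {k l : ℤ} (h : (k : ZMod n) = l) :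
    cos (2 * π * k / n) = cos (2 * π * l / n) := by
  rcases eq_or_ne n 0 with rfl | hn
  · simp
  obtain ⟨q, hq⟩ := (ZMod.intCast_eq_intCast_iff_dvd_sub _ _ _).1 h
  have hl : (l : ℝ) = k + n * q := by exact_mod_cast sub_eq_iff_eq_add'.1 hq
  have : 2 * π * l / n = 2 * π * k / n + q * (2 * π) := by
    field_simp
    rw [hl]
  rw [this, cos_add_int_mul_two_pi]

lemma cos_two_pi_mul_div_eq_cos_natAbs_valMinAbs (n : ℕ) (k : ℤ) :
    cos (2 * π * k / n) = cos (2 * π * (k : ZMod n).valMinAbs.natAbs / n) := by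
  rw [cos_two_pi_mul_div_congr n (ZMod.coe_valMinAbs (k : ZMod n)).symm, Nat.cast_natAbs,
    ← cos_abs]
  congr 1
  rw [abs_div, abs_mul, abs_of_pos two_pi_pos, Nat.abs_cast, Int.cast_abs]

lemma two_pi_mul_half_div_le_pi (n : ℕ) : 2 * π * (n / 2 : ℕ) / n ≤ π := by
  rcases Nat.eq_zero_or_pos n with rfl | hn
  · simp [pi_nonneg]
  rw [div_le_iff₀ (by exact_mod_cast hn)]
  have : ((n / 2 : ℕ) : ℝ) * 2 ≤ n := by exact_mod_cast Nat.div_mul_le_self n 2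
  nlinarith [pi_pos]

lemma cos_two_pi_mul_half_div {n : ℕ} (hn : Odd n) :
    cos (2 * π * (n / 2 : ℕ) / n) = -cos (π / n) := by
  obtain ⟨m, rfl⟩ := hn
  have : 2 * π * ((2 * m + 1) / 2 : ℕ) / ((2 * m + 1 : ℕ) : ℝ) = π - π / (2 * m + 1 : ℕ) := by
    rw [show (2 * m + 1) / 2 = m by omega]
    field_simp
    push_cast
    ring
  rw [this, cos_pi_sub]

lemma neg_cos_pi_div_le_cos {n : ℕ} (hn : Odd n) (k : ℤ) :
    -cos (π / n) ≤ cos (2 * π * k / n) := by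
  have : NeZero n := ⟨hn.pos.ne'⟩
  rw [← cos_two_pi_mul_half_div hn, cos_two_pi_mul_div_eq_cos_natAbs_valMinAbs]
  have hk := ZMod.natAbs_valMinAbs_le (k : ZMod n)
  exact cos_le_cos_of_nonneg_of_le_pi (by positivity) (two_pi_mul_half_div_le_pi n) (by gcongr)

lemma cos_eq_neg_cos_pi_div_iff {n : ℕ} (hn : Odd n) (k : ℤ) :
    cos (2 * π * k / n) = -cos (π / n) ↔
      (k : ZMod n) = (n / 2 : ℕ) ∨ (k : ZMod n) = -(n / 2 : ℕ) := by
  have : NeZero n := ⟨hn.pos.ne'⟩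
  have hn0 : (n : ℝ) ≠ 0 := by exact_mod_cast hn.pos.ne'
  have hhalf := two_pi_mul_half_div_le_pi n
  have hk := ZMod.natAbs_valMinAbs_le (k : ZMod n)
  rw [← cos_two_pi_mul_half_div hn]
  generalize n / 2 = m at hhalf hk ⊢
  constructor
  · intro h
    rw [cos_two_pi_mul_div_eq_cos_natAbs_valMinAbs] at h
    have habs := injOn_cos ⟨by positivity, le_trans (by gcongr) hhalf⟩ ⟨by positivity, hhalf⟩ h
    have hm : (k : ZMod n).valMinAbs.natAbs = m := by
      field_simp at habs
      exact_mod_cast habs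
    rw [← ZMod.coe_valMinAbs (k : ZMod n)]
    rcases Int.natAbs_eq (k : ZMod n).valMinAbs with h' | h' <;> rw [h', hm] <;> simp
  · rintro (h | h)
    · simpa using cos_two_pi_mul_div_congr n (l := m) (by simpa using h)
    · rw [cos_two_pi_mul_div_congr n (l := -m) (by simpa using h), ← cos_neg]
      push_cast
      ring_nf

def farthest (n i : ℕ) : Finset (ZMod n) :=
  {(i : ZMod n) - (n / 2 : ℕ), (i : ZMod n) + (n / 2 : ℕ)}

lemma mem_farthest_comm (n i j : ℕ) :
    (j : ZMod n) ∈ farthest n i ↔ (i : ZMod n) ∈ farthest n j := by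
  simp only [farthest, mem_insert, mem_singleton]
  constructor <;> rintro (h | h)
  exacts [Or.inr (by linear_combination -h), Or.inl (by linear_combination -h),
    Or.inr (by linear_combination -h), Or.inl (by linear_combination -h)]

lemma card_farthest {n : ℕ} (hodd : Odd n) (hn : 3 ≤ n) (i : ℕ) : #(farthest n i) = 2 := by
  refine card_pair fun h => ?_
  have h2 : ((2 * (n / 2) : ℕ) : ZMod n) = 0 := by
    push_cast
    linear_combination -h
  rw [ZMod.natCast_eq_zero_iff] at h2
  have := Nat.le_of_dvd (by omega) h2
  obtain ⟨m, rfl⟩ := hodd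
  omega

lemma neg_cos_pi_div_le_cos_sub {n : ℕ} (hn : Odd n) (i j : ℕ) :
    -cos (π / n) ≤ cos (2 * π * i / n - 2 * π * j / n) := by
  convert neg_cos_pi_div_le_cos hn (i - j) using 2
  push_cast
  ring

lemma cos_sub_eq_neg_cos_pi_div_iff {n : ℕ} (hn : Odd n) (i j : ℕ) :
    cos (2 * π * i / n - 2 * π * j / n) = -cos (π / n) ↔ (j : ZMod n) ∈ farthest n i := by
  have := cos_eq_neg_cos_pi_div_iff hn (i - j)
  push_cast at this
  rw [← sub_div, ← mul_sub, this, farthest, mem_insert, mem_singleton]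
  constructor <;> rintro (h | h)
  exacts [Or.inl (by linear_combination -h), Or.inr (by linear_combination -h),
    Or.inl (by linear_combination -h), Or.inr (by linear_combination -h)]

lemma two_mul_card_filter_lt {α : Type*} [LinearOrder α] (s : Finset α) (r : α → α → Prop)
    [DecidableRel r] (hsymm : ∀ a b, r a b → r b a) (hirr : ∀ a, ¬ r a a) :
    2 * #{p ∈ s ×ˢ s | p.1 < p.2 ∧ r p.1 p.2} = #{p ∈ s ×ˢ s | r p.1 p.2} := by
  set u : Finset (α × α) := {p ∈ s ×ˢ s | p.1 < p.2 ∧ r p.1 p.2}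
  set v : Finset (α × α) := {p ∈ s ×ˢ s | p.2 < p.1 ∧ r p.1 p.2}
  have disj : Disjoint u v := by grind [disjoint_left]
  have union : u.disjUnion v disj = {p ∈ s ×ˢ s | r p.1 p.2} := by grind
  have swap : #u = #v := card_equiv (Equiv.prodComm α α) (by grind)
  rw [← union, card_disjUnion, ← swap, two_mul]

lemma card_filter_product_eq_sum {α β : Type*} (s : Finset α) (t : Finset β)
    (r : α → β → Prop) [DecidableRel r] :
    #{p ∈ s ×ˢ t | r p.1 p.2} = ∑ a ∈ s, #{b ∈ t | r a b} := by
  simp only [card_filter, sum_product]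

lemma card_filter_Ioc_natCast_mem (n a : ℕ) [NeZero n] (S : Finset (ZMod n)) :
    #{j ∈ Ioc a (a + n) | ((j : ℕ) : ZMod n) ∈ S} = #S := by
  refine card_nbij (fun j : ℕ => (j : ZMod n)) (fun j hj => (mem_filter.1 hj).2) ?_ ?_
  · intro j hj k hk hjk
    simp only [mem_coe, mem_filter, mem_Ioc] at hj hk
    refine Nat.ModEq.eq_of_abs_lt ((ZMod.natCast_eq_natCast_iff _ _ _).1 hjk) ?_
    rw [abs_lt]
    omega
  · intro z hz
    refine ⟨a + 1 + (z - (a + 1 : ℕ) : ZMod n).val, ?_, ?_⟩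
    · have := ZMod.val_lt (z - (a + 1 : ℕ) : ZMod n)
      simp only [mem_coe, mem_filter, mem_Ioc]
      refine ⟨⟨by omega, by omega⟩, ?_⟩
      push_cast [ZMod.natCast_zmod_val]
      simpa using hz
    · push_cast [ZMod.natCast_zmod_val]
      ring

lemma sum_Ioc_zero_two_mul_add_one {M : Type*} [AddCommMonoid M] (n : ℕ) (f : ℕ → M) :
    ∑ i ∈ Ioc 0 (2 * n + 1), f i =
      ∑ i ∈ Ioc 0 n, f i + ∑ i ∈ Ioc n (n + n), f i + f (2 * n + 1) := by
  rw [sum_Ioc_succ_top (Nat.zero_le _), ← sum_Ioc_consecutive _ (Nat.zero_le n) (by omega),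
    two_mul]

lemma card_filter_Ioc_zero_two_mul_add_one (n : ℕ) (p : ℕ → Prop) [DecidablePred p] :
    #{j ∈ Ioc 0 (2 * n + 1) | p j} =
      #{j ∈ Ioc 0 n | p j} + #{j ∈ Ioc n (n + n) | p j} + if p (2 * n + 1) then 1 else 0 := by
  simp only [card_filter]
  exact sum_Ioc_zero_two_mul_add_one n _

lemma le_one_and_eq_one_iff_of_sq_eq {d e : ℝ} (hd : 0 ≤ d) (he : 0 ≤ e) (h : d ^ 2 = 1 - e) :
    d ≤ 1 ∧ (d = 1 ↔ e = 0) := by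
  refine ⟨(pow_le_one_iff_of_nonneg hd two_ne_zero).1 (by linarith), ?_⟩
  rw [← pow_eq_one_iff_of_nonneg hd two_ne_zero, h]
  constructor <;> intro <;> linarith

namespace ElongatedPyramid

-- For odd `n`, the regular `n`-gon inscribed in the circle of this radius has diameter `1`.
noncomputable def circumradius (n : ℕ) : ℝ := 1 / (2 * cos (π / (2 * n)))

noncomputable def depth (n : ℕ) (t : ℝ) : ℝ :=
  √(1 - (t ^ 2 + 1 + 2 * t * cos (π / n)) / (2 * cos (π / (2 * n))) ^ 2)

noncomputable def apexHeight (n : ℕ) (t : ℝ) : ℝ :=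
  √(1 - t ^ 2 / (2 * cos (π / (2 * n))) ^ 2) - depth n t

noncomputable def baseVertex (n i : ℕ) : EuclideanSpace ℝ (Fin 3) :=
  cyl (circumradius n) (2 * π * i / n) 0

noncomputable def midVertex (n : ℕ) (t : ℝ) (i : ℕ) : EuclideanSpace ℝ (Fin 3) :=
  cyl (t * circumradius n) (2 * π * i / n) (-depth n t)

noncomputable def apex (n : ℕ) (t : ℝ) : EuclideanSpace ℝ (Fin 3) := cyl 0 0 (apexHeight n t)

-- The middle vertex `n + j` sits below the base vertex `j`: their angles differ by `2π`.
noncomputable def vertex (n : ℕ) (t : ℝ) (i : ℕ) : EuclideanSpace ℝ (Fin 3) :=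
  if i ≤ n then baseVertex n i else if i ≤ 2 * n then midVertex n t i else apex n t

variable {n : ℕ} {t : ℝ}

lemma div_two_mul_cos_sq (n : ℕ) (x : ℝ) :
    x / (2 * cos (π / (2 * n))) ^ 2 = circumradius n ^ 2 * x := by
  rw [circumradius]
  ring

lemma circumradius_sq_mul (hn : 3 ≤ n) : circumradius n ^ 2 * (2 + 2 * cos (π / n)) = 1 := by
  have hc := cos_pi_div_pos hn
  rw [← div_two_mul_cos_sq, show π / (2 * n) = π / n / 2 by ring, two_mul_cos_half_sq]
  field_simp

lemma circumradius_sq_pos (hn : 3 ≤ n) : 0 < circumradius n ^ 2 := by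
  have := circumradius_sq_mul hn
  have := cos_pi_div_pos hn
  nlinarith [sq_nonneg (circumradius n)]

lemma depth_sq (hn : 3 ≤ n) (ht : t ∈ Set.Icc 0 1) :
    depth n t ^ 2 = 1 - circumradius n ^ 2 * (t ^ 2 + 1 + 2 * t * cos (π / n)) := by
  have hc := cos_pi_div_pos hn
  rw [depth, div_two_mul_cos_sq, sq_sqrt]
  have : 1 - circumradius n ^ 2 * (t ^ 2 + 1 + 2 * t * cos (π / n)) =
      circumradius n ^ 2 * ((1 - t) * (1 + t + 2 * cos (π / n))) := by
    linear_combination -circumradius_sq_mul hn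
  rw [this]
  exact mul_nonneg (sq_nonneg _) (mul_nonneg (by linarith [ht.2]) (by linarith [ht.1]))

lemma depth_add_apexHeight (n : ℕ) (t : ℝ) :
    depth n t + apexHeight n t = √(1 - circumradius n ^ 2 * t ^ 2) := by
  rw [apexHeight, div_two_mul_cos_sq]
  ring

lemma depth_add_apexHeight_sq (hn : 3 ≤ n) (ht : t ∈ Set.Icc 0 1) :
    (depth n t + apexHeight n t) ^ 2 = 1 - circumradius n ^ 2 * t ^ 2 := by
  have hρ := circumradius_sq_mul hn
  have hc := cos_pi_div_pos hn
  rw [depth_add_apexHeight, sq_sqrt]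
  nlinarith [ht.1, ht.2, sq_nonneg (circumradius n),
    mul_nonneg (sq_nonneg (circumradius n)) (sq_nonneg t)]

lemma circumradius_sq_add_apexHeight_sq_lt_one (hn : 3 ≤ n) (ht : t ∈ Set.Ico 0 1) :
    circumradius n ^ 2 + apexHeight n t ^ 2 < 1 := by
  have ht' : t ∈ Set.Icc 0 1 := ⟨ht.1, ht.2.le⟩
  have hρ := circumradius_sq_mul hn
  have hc := cos_pi_div_pos hn
  have hρ0 := circumradius_sq_pos hn
  set ρ := circumradius n
  set α := depth n t
  set s := √(1 - ρ ^ 2 * t ^ 2)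
  set w := √(1 - ρ ^ 2)
  have hα2 : α ^ 2 = 1 - ρ ^ 2 * (t ^ 2 + 1 + 2 * t * cos (π / n)) := depth_sq hn ht'
  have hs2 : s ^ 2 = 1 - ρ ^ 2 * t ^ 2 := by
    rw [← depth_add_apexHeight_sq hn ht', depth_add_apexHeight]
  have hw2 : w ^ 2 = 1 - ρ ^ 2 := sq_sqrt (by nlinarith)
  have hβ : apexHeight n t = s - α := by rw [eq_sub_iff_add_eq', depth_add_apexHeight]
  have hα0 : 0 ≤ α := sqrt_nonneg _
  have hw0 : 0 ≤ w := sqrt_nonneg _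
  have hαs : α ≤ s := by
    refine (pow_le_pow_iff_left₀ hα0 (sqrt_nonneg _) two_ne_zero).1 ?_
    rw [hα2, hs2]
    nlinarith [mul_nonneg ht.1 hc.le]
  -- `s² - α² - w² = -2 ρ² cos (π / n) (1 - t) < 0`
  have hsw : s < α + w := by
    refine (pow_lt_pow_iff_left₀ (sqrt_nonneg _) (by positivity) two_ne_zero).1 ?_
    nlinarith [mul_pos (mul_pos hρ0 hc) (sub_pos.2 ht.2), mul_nonneg hα0 hw0]
  have : (s - α) ^ 2 < w ^ 2 := pow_lt_pow_left₀ (by linarith) (by linarith) two_ne_zero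
  rw [hβ]
  linarith

lemma dist_baseVertex (hodd : Odd n) (hn : 3 ≤ n) (i j : ℕ) :
    dist (baseVertex n i) (baseVertex n j) ≤ 1 ∧
      (dist (baseVertex n i) (baseVertex n j) = 1 ↔ (j : ZMod n) ∈ farthest n i) := by
  rw [← cos_sub_eq_neg_cos_pi_div_iff hodd, ← add_eq_zero_iff_eq_neg]
  set C := cos (2 * π * i / n - 2 * π * j / n)
  have hC : 0 ≤ C + cos (π / n) := by linarith [neg_cos_pi_div_le_cos_sub hodd i j]
  have hsq : dist (baseVertex n i) (baseVertex n j) ^ 2 =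
      1 - 2 * circumradius n ^ 2 * (C + cos (π / n)) := by
    rw [baseVertex, baseVertex, dist_cyl_sq]
    linear_combination circumradius_sq_mul hn
  refine (le_one_and_eq_one_iff_of_sq_eq dist_nonneg (by positivity) hsq).imp_right
    (·.trans ?_)
  simp [(circumradius_sq_pos hn).ne']

lemma dist_baseVertex_midVertex (hodd : Odd n) (hn : 3 ≤ n) (ht : t ∈ Set.Ioc 0 1) (i j : ℕ) :
    dist (baseVertex n i) (midVertex n t j) ≤ 1 ∧
      (dist (baseVertex n i) (midVertex n t j) = 1 ↔ (j : ZMod n) ∈ farthest n i) := by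
  rw [← cos_sub_eq_neg_cos_pi_div_iff hodd, ← add_eq_zero_iff_eq_neg]
  set C := cos (2 * π * i / n - 2 * π * j / n)
  have hC : 0 ≤ C + cos (π / n) := by linarith [neg_cos_pi_div_le_cos_sub hodd i j]
  have ht0 := ht.1
  have hsq : dist (baseVertex n i) (midVertex n t j) ^ 2 =
      1 - 2 * t * circumradius n ^ 2 * (C + cos (π / n)) := by
    rw [baseVertex, midVertex, dist_cyl_sq]
    linear_combination depth_sq hn (Set.Ioc_subset_Icc_self ht)
  refine (le_one_and_eq_one_iff_of_sq_eq dist_nonneg (by positivity) hsq).imp_right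
    (·.trans ?_)
  simp [(circumradius_sq_pos hn).ne', ht0.ne']

lemma dist_midVertex_lt_one (hodd : Odd n) (hn : 3 ≤ n) (ht : t ∈ Set.Ioo 0 1) (i j : ℕ) :
    dist (midVertex n t i) (midVertex n t j) < 1 := by
  set C := cos (2 * π * i / n - 2 * π * j / n)
  have hC : 0 ≤ C + cos (π / n) := by linarith [neg_cos_pi_div_le_cos_sub hodd i j]
  have hchord : 2 * circumradius n ^ 2 * (1 - C) ≤ 1 := by
    nlinarith [circumradius_sq_mul hn, mul_nonneg (sq_nonneg (circumradius n)) hC]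
  refine (pow_lt_one_iff_of_nonneg dist_nonneg two_ne_zero).1 ?_
  calc dist (midVertex n t i) (midVertex n t j) ^ 2
      = t ^ 2 * (2 * circumradius n ^ 2 * (1 - C)) := by
        rw [midVertex, midVertex, dist_cyl_sq]
        ring
    _ ≤ t ^ 2 * 1 := by gcongr
    _ < 1 := by nlinarith [ht.1, ht.2]

lemma dist_baseVertex_apex_lt_one (hn : 3 ≤ n) (ht : t ∈ Set.Ico 0 1) (i : ℕ) :
    dist (baseVertex n i) (apex n t) < 1 := by
  refine (pow_lt_one_iff_of_nonneg dist_nonneg two_ne_zero).1 ?_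
  rw [baseVertex, apex, dist_cyl_sq]
  linarith [circumradius_sq_add_apexHeight_sq_lt_one hn ht]

lemma dist_midVertex_apex (hn : 3 ≤ n) (ht : t ∈ Set.Icc 0 1) (i : ℕ) :
    dist (midVertex n t i) (apex n t) = 1 := by
  refine (pow_eq_one_iff_of_nonneg dist_nonneg two_ne_zero).1 ?_
  rw [midVertex, apex, dist_cyl_sq]
  linear_combination depth_add_apexHeight_sq hn ht

lemma vertex_of_le {i : ℕ} (h : i ≤ n) : vertex n t i = baseVertex n i := if_pos h

lemma vertex_of_lt_of_le {i : ℕ} (h₁ : n < i) (h₂ : i ≤ 2 * n) :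
    vertex n t i = midVertex n t i := by
  simp [vertex, h₂, h₁.not_ge]

lemma vertex_two_mul_add_one : vertex n t (2 * n + 1) = apex n t := by
  rw [vertex, if_neg (by omega), if_neg (by omega)]

lemma vertex_eq_baseVertex_or_midVertex_or_apex (i : ℕ) :
    (∃ k, vertex n t i = baseVertex n k) ∨ (∃ k, vertex n t i = midVertex n t k) ∨
      vertex n t i = apex n t := by
  unfold vertex
  split_ifs
  exacts [Or.inl ⟨i, rfl⟩, Or.inr (Or.inl ⟨i, rfl⟩), Or.inr (Or.inr rfl)]

lemma dist_vertex_le_one (hodd : Odd n) (hn : 3 ≤ n) (ht : t ∈ Set.Ioo 0 1) (i j : ℕ) :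
    dist (vertex n t i) (vertex n t j) ≤ 1 := by
  obtain ⟨k, hk⟩ | ⟨k, hk⟩ | hk := vertex_eq_baseVertex_or_midVertex_or_apex (n := n) (t := t) i <;>
  obtain ⟨l, hl⟩ | ⟨l, hl⟩ | hl := vertex_eq_baseVertex_or_midVertex_or_apex (n := n) (t := t) j <;>
  rw [hk, hl]
  · exact (dist_baseVertex hodd hn k l).1
  · exact (dist_baseVertex_midVertex hodd hn (Set.Ioo_subset_Ioc_self ht) k l).1
  · exact (dist_baseVertex_apex_lt_one hn (Set.Ioo_subset_Ico_self ht) k).le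
  · rw [dist_comm]
    exact (dist_baseVertex_midVertex hodd hn (Set.Ioo_subset_Ioc_self ht) l k).1
  · exact (dist_midVertex_lt_one hodd hn ht k l).le
  · exact (dist_midVertex_apex hn (Set.Ioo_subset_Icc_self ht) k).le
  · rw [dist_comm]
    exact (dist_baseVertex_apex_lt_one hn (Set.Ioo_subset_Ico_self ht) l).le
  · rw [dist_comm]
    exact (dist_midVertex_apex hn (Set.Ioo_subset_Icc_self ht) l).le
  · simp

lemma card_filter_Ioc_natCast_mem_farthest (hodd : Odd n) (hn : 3 ≤ n) (a i : ℕ) :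
    #{j ∈ Ioc a (a + n) | ((j : ℕ) : ZMod n) ∈ farthest n i} = 2 := by
  have : NeZero n := ⟨hodd.pos.ne'⟩
  rw [card_filter_Ioc_natCast_mem, card_farthest hodd hn]

lemma card_diametric_baseVertex (hodd : Odd n) (hn : 3 ≤ n) (ht : t ∈ Set.Ioo 0 1) {i : ℕ}
    (hi : i ≤ n) : #{j ∈ Ioc 0 (2 * n + 1) | dist (vertex n t i) (vertex n t j) = 1} = 4 := by
  rw [card_filter_Ioc_zero_two_mul_add_one, vertex_of_le hi, vertex_two_mul_add_one,
    if_neg (dist_baseVertex_apex_lt_one hn (Set.Ioo_subset_Ico_self ht) i).ne]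
  have hbase : #{j ∈ Ioc 0 n | dist (baseVertex n i) (vertex n t j) = 1} = 2 := by
    rw [filter_congr fun j hj => by
      rw [vertex_of_le (mem_Ioc.1 hj).2, (dist_baseVertex hodd hn i j).2]]
    simpa using card_filter_Ioc_natCast_mem_farthest hodd hn 0 i
  have hmid : #{j ∈ Ioc n (n + n) | dist (baseVertex n i) (vertex n t j) = 1} = 2 := by
    rw [filter_congr fun j hj => by
      rw [vertex_of_lt_of_le (mem_Ioc.1 hj).1 (by have := (mem_Ioc.1 hj).2; omega),
        (dist_baseVertex_midVertex hodd hn (Set.Ioo_subset_Ioc_self ht) i j).2]]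
    exact card_filter_Ioc_natCast_mem_farthest hodd hn n i
  rw [hbase, hmid]

lemma card_diametric_midVertex (hodd : Odd n) (hn : 3 ≤ n) (ht : t ∈ Set.Ioo 0 1) {i : ℕ}
    (hi₁ : n < i) (hi₂ : i ≤ 2 * n) :
    #{j ∈ Ioc 0 (2 * n + 1) | dist (vertex n t i) (vertex n t j) = 1} = 3 := by
  rw [card_filter_Ioc_zero_two_mul_add_one, vertex_of_lt_of_le hi₁ hi₂, vertex_two_mul_add_one,
    if_pos (dist_midVertex_apex hn (Set.Ioo_subset_Icc_self ht) i)]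
  have hbase : #{j ∈ Ioc 0 n | dist (midVertex n t i) (vertex n t j) = 1} = 2 := by
    rw [filter_congr fun j hj => by
      rw [vertex_of_le (mem_Ioc.1 hj).2, dist_comm,
        (dist_baseVertex_midVertex hodd hn (Set.Ioo_subset_Ioc_self ht) j i).2, mem_farthest_comm]]
    simpa using card_filter_Ioc_natCast_mem_farthest hodd hn 0 i
  have hmid : #{j ∈ Ioc n (n + n) | dist (midVertex n t i) (vertex n t j) = 1} = 0 := by
    rw [card_eq_zero, filter_eq_empty_iff]
    intro j hj
    rw [vertex_of_lt_of_le (mem_Ioc.1 hj).1 (by have := (mem_Ioc.1 hj).2; omega)]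
    exact (dist_midVertex_lt_one hodd hn ht i j).ne
  rw [hbase, hmid]

lemma card_diametric_apex (hn : 3 ≤ n) (ht : t ∈ Set.Ioo 0 1) :
    #{j ∈ Ioc 0 (2 * n + 1) | dist (vertex n t (2 * n + 1)) (vertex n t j) = 1} = n := by
  rw [card_filter_Ioc_zero_two_mul_add_one, vertex_two_mul_add_one, dist_self,
    if_neg zero_ne_one]
  have hbase : #{j ∈ Ioc 0 n | dist (apex n t) (vertex n t j) = 1} = 0 := by
    rw [card_eq_zero, filter_eq_empty_iff]
    intro j hj
    rw [vertex_of_le (mem_Ioc.1 hj).2, dist_comm]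
    exact (dist_baseVertex_apex_lt_one hn (Set.Ioo_subset_Ico_self ht) j).ne
  have hmid : #{j ∈ Ioc n (n + n) | dist (apex n t) (vertex n t j) = 1} = n := by
    rw [filter_true_of_mem fun j hj => ?_, Nat.card_Ioc, Nat.add_sub_cancel]
    rw [vertex_of_lt_of_le (mem_Ioc.1 hj).1 (by have := (mem_Ioc.1 hj).2; omega), dist_comm]
    exact dist_midVertex_apex hn (Set.Ioo_subset_Icc_self ht) j
  rw [hbase, hmid, zero_add, add_zero]

lemma card_diametric_pairs (hodd : Odd n) (hn : 3 ≤ n) (ht : t ∈ Set.Ioo 0 1) :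
    #{p ∈ Icc 1 (2 * n + 1) ×ˢ Icc 1 (2 * n + 1) |
      p.1 < p.2 ∧ dist (vertex n t p.1) (vertex n t p.2) = 1} = 4 * n := by
  have h := (two_mul_card_filter_lt (Icc 1 (2 * n + 1))
    (fun i j => dist (vertex n t i) (vertex n t j) = 1) (fun i j h => (dist_comm _ _).trans h)
    (fun i => by simp)).trans
      (card_filter_product_eq_sum _ _ fun i j => dist (vertex n t i) (vertex n t j) = 1)
  have hIcc : Icc 1 (2 * n + 1) = Ioc 0 (2 * n + 1) := by
    ext
    simp only [mem_Icc, mem_Ioc]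
    omega
  rw [hIcc, sum_Ioc_zero_two_mul_add_one,
    sum_congr rfl fun i hi => card_diametric_baseVertex hodd hn ht (mem_Ioc.1 hi).2,
    sum_congr rfl fun i hi => card_diametric_midVertex hodd hn ht (mem_Ioc.1 hi).1
      (by have := (mem_Ioc.1 hi).2; omega),
    card_diametric_apex hn ht] at h
  simp only [sum_const, Nat.card_Ioc, smul_eq_mul] at h
  rw [hIcc]
  omega

lemma baseVertex_eq (n j : ℕ) : baseVertex n j =
    pt (cos (2 * π * j / n) / (2 * cos (π / (2 * n))))
      (sin (2 * π * j / n) / (2 * cos (π / (2 * n)))) 0 := by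
  rw [baseVertex, cyl, circumradius]
  congr 1 <;> ring

lemma midVertex_add (hn : n ≠ 0) (j : ℕ) :
    midVertex n t (n + j) = t • baseVertex n j - depth n t • pt 0 0 1 := by
  have : 2 * π * (n + j : ℕ) / n = 2 * π * j / n + 2 * π := by
    push_cast
    field_simp
    ring
  rw [midVertex, this, baseVertex, smul_cyl_sub_smul_pt]
  simp [cyl]

lemma apex_eq (n : ℕ) (t : ℝ) : apex n t = apexHeight n t • pt 0 0 1 := by
  ext k
  fin_cases k <;> simp [apex, cyl, pt]

lemma eq_vertex_of_mem_Icc (hn : n ≠ 0) {x : ℕ → EuclideanSpace ℝ (Fin 3)}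
    (hbase : ∀ j, 1 ≤ j → j ≤ n →
      x j = pt (cos (2 * π * j / n) / (2 * cos (π / (2 * n))))
               (sin (2 * π * j / n) / (2 * cos (π / (2 * n)))) 0)
    (hmid : ∀ j, 1 ≤ j → j ≤ n → x (n + j) = t • x j - depth n t • pt 0 0 1)
    (hapex : x (2 * n + 1) = apexHeight n t • pt 0 0 1) {i : ℕ} (hi : i ∈ Icc 1 (2 * n + 1)) :
    x i = vertex n t i := by
  obtain ⟨hi₁, hi₂⟩ := mem_Icc.1 hi
  rcases le_or_gt i n with hin | hin
  · rw [vertex_of_le hin, hbase i hi₁ hin, baseVertex_eq]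
  rcases le_or_gt i (2 * n) with hi2n | hi2n
  · obtain ⟨j, rfl⟩ : ∃ j, i = n + j := ⟨i - n, by omega⟩
    rw [vertex_of_lt_of_le hin hi2n, hmid j (by omega) (by omega), hbase j (by omega) (by omega),
      midVertex_add hn, baseVertex_eq]
  · obtain rfl : i = 2 * n + 1 := by omega
    rw [hapex, vertex_two_mul_add_one, apex_eq]

end ElongatedPyramid

open ElongatedPyramid

/-- The elongated pyramid vertex set is extremal. -/
theorem stmt_3 (n : ℕ) (hn : 3 ≤ n) (hodd : Odd n) (t : ℝ) (ht : t ∈ Set.Ioo (0:ℝ) 1)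
    (α β : ℝ)
    (hα : α = Real.sqrt (1 - (t ^ 2 + 1 + 2 * t * Real.cos (π / n)) / (2 * Real.cos (π / (2 * n))) ^ 2))
    (hβ : β = Real.sqrt (1 - t ^ 2 / (2 * Real.cos (π / (2 * n))) ^ 2) - α)
    (x : ℕ → EuclideanSpace ℝ (Fin 3))
    (hbase : ∀ j, 1 ≤ j → j ≤ n →
      x j = pt (Real.cos (2 * π * j / n) / (2 * Real.cos (π / (2 * n))))
               (Real.sin (2 * π * j / n) / (2 * Real.cos (π / (2 * n)))) 0)
    (hmid : ∀ j, 1 ≤ j → j ≤ n → x (n + j) = t • x j - α • pt 0 0 1)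
    (hapex : x (2 * n + 1) = β • pt 0 0 1) :
    (∀ i j, 1 ≤ i → i ≤ 2 * n + 1 → 1 ≤ j → j ≤ 2 * n + 1 → dist (x i) (x j) ≤ 1) ∧
    ((Finset.Icc 1 (2 * n + 1) ×ˢ Finset.Icc 1 (2 * n + 1)).filter
        (fun p => p.1 < p.2 ∧ dist (x p.1) (x p.2) = 1)).card = 4 * n := by
  subst hα hβ
  have hx : ∀ i ∈ Icc 1 (2 * n + 1), x i = vertex n t i := fun i =>
    eq_vertex_of_mem_Icc (by omega) hbase hmid hapex
  refine ⟨fun i j hi₁ hi₂ hj₁ hj₂ => ?_, ?_⟩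
  · rw [hx i (mem_Icc.2 ⟨hi₁, hi₂⟩), hx j (mem_Icc.2 ⟨hj₁, hj₂⟩)]
    exact dist_vertex_le_one hodd hn ht i j
  · rw [← card_diametric_pairs hodd hn ht]
    congr 1
    refine filter_congr fun p hp => ?_
    rw [mem_product] at hp
    rw [hx p.1 hp.1, hx p.2 hp.2]
end

section
/- Let n ≥ 4 be an even integer and let {x_1,…,x_{2n+1}} be the diminished trapezohedron vertex set. Then this set is extremal: all pairwise distances are at most 1, and the number of unordered pairs {i,j} with 1 ≤ i < j ≤ 2n+1 and |x_i − x_j| = 1 is exactly 4n = 2(2n+1) − 2. -/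
open Real MeasureTheory Metric

/-- The rotation of ℝ³ by angle θ about the x₃-axis. -/
noncomputable def rotZ (θ : ℝ) (p : EuclideanSpace ℝ (Fin 3)) : EuclideanSpace ℝ (Fin 3) :=
  pt (Real.cos θ * p 0 - Real.sin θ * p 1) (Real.sin θ * p 0 + Real.cos θ * p 1) (p 2)

/-!
The `2n` vertices other than the apex lie on the circle of radius `1/2` about the `x₃`-axis, at
the angles `kπ/n`, alternately at heights `0` and `s = sin (π/(2n))`. Two of them at the same
height whose angles differ by `2dπ/n` are at squared distance `sin² (dπ/n) = 1 - cos² (dπ/n)`; a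
base and a middle vertex whose angles differ by `(2d+1)π/n` are at squared distance
`sin² ((2d+1)π/(2n)) + sin² (π/(2n)) = 1 - cos (dπ/n) cos ((d+1)π/n)`. As `n` is even, the zeros
`π/2 + kπ` of `cos` are integer multiples of `π/n`, so `cos` keeps its sign between `dπ/n` and
`(d+1)π/n`: all these distances are at most `1`, with equality exactly when a cosine vanishes.
The apex is at distance `1` from the base and closer to the middle level. This gives `n/2`
diametric pairs on each level, `2n` between the levels and `n` through the apex.
-/

namespace DiminishedTrapezohedron

lemma le_one_and_eq_one_iff_of_sq_eq {r c : ℝ} (hr : 0 ≤ r) (h : r ^ 2 = 1 - c) (hc : 0 ≤ c) :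
    r ≤ 1 ∧ (r = 1 ↔ c = 0) := by
  refine ⟨by nlinarith, fun h1 => by subst h1; linarith, fun h0 => ?_⟩
  subst h0
  nlinarith

lemma sin_sq_add_sin_sq (a b : ℝ) : sin a ^ 2 + sin b ^ 2 = 1 - cos (a + b) * cos (a - b) := by
  rw [cos_add, cos_sub]
  nlinarith [sin_sq_add_cos_sq a, sin_sq_add_cos_sq b]

lemma cos_pi_mul_div_eq_zero_iff {n d : ℕ} (hn : 0 < n) (hd : d ≤ 2 * n) :
    cos (π * d / n) = 0 ↔ 2 * d = n ∨ 2 * d = 3 * n := by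
  have hn' : (n : ℝ) ≠ 0 := by positivity
  rw [cos_eq_zero_iff]
  constructor
  · rintro ⟨k, hk⟩
    have hk' : ((2 * d : ℕ) : ℤ) = (2 * k + 1) * n := by
      have : (2 * d : ℝ) = (2 * k + 1) * n := by
        field_simp at hk; nlinarith [pi_pos]
      exact_mod_cast this
    have hn'' : (0 : ℤ) < n := by exact_mod_cast hn
    have hk0 : 0 ≤ k := by nlinarith
    have hk1 : k ≤ 1 := by push_cast at hk'; nlinarith
    interval_cases k <;> omega
  · rintro (h | h) <;> [refine ⟨0, ?_⟩; refine ⟨1, ?_⟩] <;>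
    · have := congrArg (Nat.cast (R := ℝ)) h
      push_cast at this ⊢
      field_simp
      linarith

lemma cos_mul_cos_succ_nonneg {n : ℕ} (hn : Even n) (d : ℕ) :
    0 ≤ cos (π * d / n) * cos (π * (d + 1) / n) := by
  obtain ⟨m, rfl⟩ := hn
  rcases Nat.eq_zero_or_pos m with rfl | hm
  · simp
  have hm' : (0 : ℝ) < ↑(m + m) := by positivity
  by_contra! hneg
  have hab : π * d / ↑(m + m) ≤ π * (d + 1) / ↑(m + m) := by gcongr; linarith
  obtain ⟨c, ⟨hdc, hcd⟩, hc⟩ :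
      ∃ c ∈ Set.Ioo (π * d / ↑(m + m)) (π * (d + 1) / ↑(m + m)), cos c = 0 := by
    rcases mul_neg_iff.1 hneg with ⟨h1, h2⟩ | ⟨h1, h2⟩
    · exact intermediate_value_Ioo' hab continuous_cos.continuousOn ⟨h2, h1⟩
    · exact intermediate_value_Ioo hab continuous_cos.continuousOn ⟨h1, h2⟩
  obtain ⟨k, rfl⟩ := cos_eq_zero_iff.1 hc
  -- the zero `(2k+1)π/2 = (2k+1)m · π/n` of cos is an integer multiple of `π/n`
  have hlo : ((d : ℤ) : ℝ) < ((2 * k + 1) * m : ℤ) := by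
    rw [div_lt_div_iff₀ hm' two_pos] at hdc; push_cast at hdc ⊢; nlinarith [pi_pos]
  have hhi : (((2 * k + 1) * m : ℤ) : ℝ) < ((d + 1 : ℤ) : ℝ) := by
    rw [div_lt_div_iff₀ two_pos hm'] at hcd; push_cast at hcd ⊢; nlinarith [pi_pos]
  have := Int.cast_lt.1 hlo
  have := Int.cast_lt.1 hhi
  omega

noncomputable def ringPt (θ h : ℝ) : EuclideanSpace ℝ (Fin 3) :=
  pt ((1 / 2) * cos θ) ((1 / 2) * sin θ) h

lemma dist_pt_sq (a b c a' b' c' : ℝ) :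
    dist (pt a b c) (pt a' b' c') ^ 2 = (a - a') ^ 2 + (b - b') ^ 2 + (c - c') ^ 2 := by
  rw [EuclideanSpace.dist_eq, sq_sqrt (by positivity)]
  simp [Fin.sum_univ_three, pt, Real.dist_eq, sq_abs]

lemma dist_ringPt_sq (α β h k : ℝ) :
    dist (ringPt α h) (ringPt β k) ^ 2 = sin ((α - β) / 2) ^ 2 + (h - k) ^ 2 := by
  have hcos : cos (α - β) = 1 - 2 * sin ((α - β) / 2) ^ 2 := by
    have := cos_two_mul' ((α - β) / 2)
    rw [mul_div_cancel₀ _ two_ne_zero, cos_sq'] at this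
    linarith
  rw [ringPt, ringPt, dist_pt_sq]
  nlinarith [cos_sub α β, sin_sq_add_cos_sq α, sin_sq_add_cos_sq β]

lemma dist_ringPt_pt_sq (θ h c : ℝ) : dist (ringPt θ h) (pt 0 0 c) ^ 2 = 1 / 4 + (h - c) ^ 2 := by
  rw [ringPt, dist_pt_sq]
  nlinarith [sin_sq_add_cos_sq θ]

lemma rotZ_ringPt (φ θ h : ℝ) : rotZ φ (ringPt θ h) = ringPt (θ + φ) h := by
  ext i; fin_cases i <;> simp [rotZ, ringPt, pt, cos_add, sin_add] <;> ring

lemma ringPt_add_smul (θ h t : ℝ) : ringPt θ h + t • pt 0 0 1 = ringPt θ (h + t) := by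
  ext i; fin_cases i <;> simp [ringPt, pt]

lemma ringPt_sub_two_pi (θ h : ℝ) : ringPt (θ - 2 * π) h = ringPt θ h := by
  rw [ringPt, ringPt, cos_sub_two_pi, sin_sub_two_pi]

/-- The middle vertex `x_{n+j} = T x_j + s e₃` sits at angle `π(2j+1)/n`; writing this as
`π(2i+1)/n` with `i = n + j` only adds a full turn. -/
noncomputable def vertex (n i : ℕ) : EuclideanSpace ℝ (Fin 3) :=
  if i ≤ n then ringPt (2 * π * i / n) 0
  else if i ≤ 2 * n then ringPt (π * (2 * i + 1) / n) (sin (π / (2 * n)))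
  else pt 0 0 (√3 / 2)

variable {n i j : ℕ}

lemma vertex_of_le (h : i ≤ n) : vertex n i = ringPt (2 * π * i / n) 0 := if_pos h

lemma vertex_of_lt_of_le (h₁ : n < i) (h₂ : i ≤ 2 * n) :
    vertex n i = ringPt (π * (2 * i + 1) / n) (sin (π / (2 * n))) := by
  rw [vertex, if_neg h₁.not_ge, if_pos h₂]

lemma vertex_two_mul_add_one : vertex n (2 * n + 1) = pt 0 0 (√3 / 2) := by
  rw [vertex, if_neg (by omega), if_neg (by omega)]

lemma eq_vertex (x : ℕ → EuclideanSpace ℝ (Fin 3))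
    (hbase : ∀ j, 1 ≤ j → j ≤ n →
      x j = pt ((1 / 2) * cos (2 * π * j / n)) ((1 / 2) * sin (2 * π * j / n)) 0)
    (hmid : ∀ j, 1 ≤ j → j ≤ n → x (n + j) = rotZ (π / n) (x j) + sin (π / (2 * n)) • pt 0 0 1)
    (hapex : x (2 * n + 1) = (√3 / 2) • pt 0 0 1) (hi : 1 ≤ i) (hi' : i ≤ 2 * n + 1) :
    x i = vertex n i := by
  rcases (by omega : i ≤ n ∨ n < i ∧ i ≤ 2 * n ∨ i = 2 * n + 1) with h | ⟨h, h'⟩ | rfl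
  · rw [vertex_of_le h, hbase i hi h, ringPt]
  · obtain ⟨j, rfl⟩ : ∃ j, i = n + j := ⟨i - n, by omega⟩
    have hn : (n : ℝ) ≠ 0 := by norm_cast; omega
    rw [vertex_of_lt_of_le h h', hmid j (by omega) (by omega), hbase j (by omega) (by omega),
      ← ringPt, rotZ_ringPt, ringPt_add_smul, zero_add,
      ← ringPt_sub_two_pi (π * (2 * ↑(n + j) + 1) / n)]
    congr 1
    push_cast
    field_simp
    ring
  · rw [vertex_two_mul_add_one, hapex]
    ext k; fin_cases k <;> simp [pt]

lemma dist_vertex_sq_of_same_level (hij : i < j) (hj : j ≤ 2 * n) (hlevel : j ≤ n ∨ n < i) :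
    dist (vertex n i) (vertex n j) ^ 2 = 1 - cos (π * ↑(j - i) / n) ^ 2 := by
  rcases hlevel with hj' | hi
  · rw [vertex_of_le (by omega), vertex_of_le hj', dist_ringPt_sq, ← sin_sq,
      show (2 * π * i / n - 2 * π * j / n) / 2 = -(π * ↑(j - i) / n) by
        rw [Nat.cast_sub hij.le]; ring]
    simp
  · rw [vertex_of_lt_of_le hi (by omega), vertex_of_lt_of_le (by omega) hj, dist_ringPt_sq,
      ← sin_sq, show (π * (2 * i + 1) / n - π * (2 * j + 1) / n) / 2 = -(π * ↑(j - i) / n) by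
        rw [Nat.cast_sub hij.le]; ring]
    simp

lemma dist_vertex_sq_of_le_of_lt (hi : i ≤ n) (hj : n < j) (hj' : j ≤ 2 * n) :
    dist (vertex n i) (vertex n j) ^ 2 =
      1 - cos (π * ↑(j - i) / n) * cos (π * (↑(j - i) + 1) / n) := by
  rw [vertex_of_le hi, vertex_of_lt_of_le hj hj', dist_ringPt_sq, zero_sub, neg_sq,
    show (2 * π * i / n - π * (2 * j + 1) / n) / 2 = -(π * (2 * ↑(j - i) + 1) / (2 * n)) by
      rw [Nat.cast_sub (by omega)]; field_simp; ring,
    sin_neg, neg_sq, sin_sq_add_sin_sq, mul_comm]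
  congr 4 <;> field_simp <;> ring

lemma dist_vertex_two_mul_add_one_of_le (hi : i ≤ n) :
    dist (vertex n i) (vertex n (2 * n + 1)) = 1 := by
  rw [← pow_eq_one_iff_of_nonneg dist_nonneg two_ne_zero, vertex_of_le hi, vertex_two_mul_add_one,
    dist_ringPt_pt_sq]
  nlinarith [sq_sqrt (show (0 : ℝ) ≤ 3 by norm_num)]

lemma dist_vertex_two_mul_add_one_lt_one (hi : n < i) (hi' : i ≤ 2 * n) :
    dist (vertex n i) (vertex n (2 * n + 1)) < 1 := by
  have hn : (1 : ℝ) ≤ n := by exact_mod_cast (by omega : 1 ≤ n)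
  have hs : 0 < sin (π / (2 * n)) := by
    refine sin_pos_of_pos_of_lt_pi (by positivity) ?_
    rw [div_lt_iff₀ (by positivity)]
    nlinarith [pi_pos]
  have h3 : (1 : ℝ) < √3 := by rw [lt_sqrt zero_le_one]; norm_num
  rw [← sq_lt_one_iff₀ dist_nonneg, vertex_of_lt_of_le hi hi', vertex_two_mul_add_one,
    dist_ringPt_pt_sq]
  nlinarith [sin_le_one (π / (2 * n)), sq_sqrt (show (0 : ℝ) ≤ 3 by norm_num)]

/-- Meant for `i < j`, where `j - i` does not truncate. -/
abbrev IsDiametricPair (n i j : ℕ) : Prop :=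
  j = 2 * n + 1 ∧ i ≤ n ∨
    j ≤ 2 * n ∧ (2 * (j - i) = n ∨
      i ≤ n ∧ n < j ∧ (2 * (j - i) = 3 * n ∨ 2 * (j - i + 1) = n ∨ 2 * (j - i + 1) = 3 * n))

theorem dist_vertex_le_one_and_eq_one_iff (hn : Even n) (hi : 1 ≤ i) (hij : i < j)
    (hj : j ≤ 2 * n + 1) :
    dist (vertex n i) (vertex n j) ≤ 1 ∧
      (dist (vertex n i) (vertex n j) = 1 ↔ IsDiametricPair n i j) := by
  have hn0 : 0 < n := by omega
  rcases (by omega : (j ≤ n ∨ n < i) ∧ j ≤ 2 * n ∨ i ≤ n ∧ n < j ∧ j ≤ 2 * n ∨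
    i ≤ n ∧ j = 2 * n + 1 ∨ n < i ∧ j = 2 * n + 1) with h | h | ⟨hi', rfl⟩ | ⟨hi', rfl⟩
  · obtain ⟨hle, hiff⟩ := le_one_and_eq_one_iff_of_sq_eq dist_nonneg
      (dist_vertex_sq_of_same_level hij h.2 h.1) (sq_nonneg _)
    refine ⟨hle, hiff.trans ?_⟩
    rw [pow_eq_zero_iff two_ne_zero, cos_pi_mul_div_eq_zero_iff hn0 (by omega), IsDiametricPair]
    omega
  · obtain ⟨hle, hiff⟩ := le_one_and_eq_one_iff_of_sq_eq dist_nonneg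
      (dist_vertex_sq_of_le_of_lt h.1 h.2.1 h.2.2) (cos_mul_cos_succ_nonneg hn _)
    refine ⟨hle, hiff.trans ?_⟩
    rw [mul_eq_zero, ← Nat.cast_succ, cos_pi_mul_div_eq_zero_iff hn0 (by omega),
      cos_pi_mul_div_eq_zero_iff hn0 (by omega), IsDiametricPair]
    omega
  · have h1 := dist_vertex_two_mul_add_one_of_le hi'
    exact ⟨h1.le, iff_of_true h1 (Or.inl ⟨rfl, hi'⟩)⟩
  · have h1 := dist_vertex_two_mul_add_one_lt_one hi' (by omega)
    exact ⟨h1.le, iff_of_false h1.ne (by omega)⟩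

open Finset in
theorem card_isDiametricPair (hn : Even n) :
    ((Icc 1 (2 * n + 1) ×ˢ Icc 1 (2 * n + 1)).filter
      (fun p => p.1 < p.2 ∧ IsDiametricPair n p.1 p.2)).card = 4 * n := by
  obtain ⟨m, rfl⟩ := hn
  rcases Nat.eq_zero_or_pos m with rfl | hm
  · decide
  have hsplit : (Icc 1 (2 * (m + m) + 1) ×ˢ Icc 1 (2 * (m + m) + 1)).filter
      (fun p => p.1 < p.2 ∧ IsDiametricPair (m + m) p.1 p.2) =
      (Icc 1 (m + m)).image (fun i => (i, 4 * m + 1)) ∪ (Icc 1 (3 * m)).image (fun i => (i, i + m)) ∪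
        (Icc 1 m).image (fun i => (i, i + 3 * m)) ∪
        (Icc 1 (m + 1)).image (fun i => (i, i + 3 * m - 1)) ∪
        (Icc (m + 2) (2 * m)).image (fun i => (i, i + m - 1)) := by
    ext ⟨i, j⟩
    simp only [mem_filter, mem_product, mem_Icc, mem_union, mem_image, Prod.mk.injEq,
      existsAndEq, true_and]
    omega
  have hgraph : ∀ (s : Finset ℕ) (f : ℕ → ℕ), (s.image fun i => (i, f i)).card = s.card :=
    fun s f => card_image_of_injective s fun _ _ h => congrArg Prod.fst h
  rw [hsplit, card_union_of_disjoint, card_union_of_disjoint, card_union_of_disjoint,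
    card_union_of_disjoint]
  · simp only [hgraph, Nat.card_Icc]
    omega
  all_goals
    refine disjoint_left.2 fun ⟨i, j⟩ hp hp' => ?_
    simp only [mem_union, mem_image, mem_Icc, Prod.mk.injEq, existsAndEq, true_and] at hp hp'
    omega

end DiminishedTrapezohedron

open DiminishedTrapezohedron in
theorem stmt_4_general (n : ℕ) (heven : Even n)
    (x : ℕ → EuclideanSpace ℝ (Fin 3))
    (hbase : ∀ j, 1 ≤ j → j ≤ n →
      x j = pt ((1 / 2) * Real.cos (2 * π * j / n)) ((1 / 2) * Real.sin (2 * π * j / n)) 0)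
    (hmid : ∀ j, 1 ≤ j → j ≤ n →
      x (n + j) = rotZ (π / n) (x j) + Real.sin (π / (2 * n)) • pt 0 0 1)
    (hapex : x (2 * n + 1) = (Real.sqrt 3 / 2) • pt 0 0 1) :
    (∀ i j, 1 ≤ i → i ≤ 2 * n + 1 → 1 ≤ j → j ≤ 2 * n + 1 → dist (x i) (x j) ≤ 1) ∧
    ((Finset.Icc 1 (2 * n + 1) ×ˢ Finset.Icc 1 (2 * n + 1)).filter
        (fun p => p.1 < p.2 ∧ dist (x p.1) (x p.2) = 1)).card = 4 * n := by
  have hx : ∀ {i}, 1 ≤ i → i ≤ 2 * n + 1 → x i = vertex n i := eq_vertex x hbase hmid hapex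
  refine ⟨fun i j hi hi' hj hj' => ?_, ?_⟩
  · rw [hx hi hi', hx hj hj']
    rcases lt_trichotomy i j with h | rfl | h
    · exact (dist_vertex_le_one_and_eq_one_iff heven hi h hj').1
    · simp
    · rw [dist_comm]
      exact (dist_vertex_le_one_and_eq_one_iff heven hj h hi').1
  · rw [← card_isDiametricPair heven]
    congr 1
    refine Finset.filter_congr fun ⟨i, j⟩ hp => ?_
    simp only [Finset.mem_product, Finset.mem_Icc] at hp
    rw [hx hp.1.1 hp.1.2, hx hp.2.1 hp.2.2]
    exact and_congr_right fun h => (dist_vertex_le_one_and_eq_one_iff heven hp.1.1 h hp.2.2).2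

/-- The diminished trapezohedron vertex set is extremal. -/
theorem stmt_4 (n : ℕ) (hn : 4 ≤ n) (heven : Even n)
    (x : ℕ → EuclideanSpace ℝ (Fin 3))
    (hbase : ∀ j, 1 ≤ j → j ≤ n →
      x j = pt ((1 / 2) * Real.cos (2 * π * j / n)) ((1 / 2) * Real.sin (2 * π * j / n)) 0)
    (hmid : ∀ j, 1 ≤ j → j ≤ n →
      x (n + j) = rotZ (π / n) (x j) + Real.sin (π / (2 * n)) • pt 0 0 1)
    (hapex : x (2 * n + 1) = (Real.sqrt 3 / 2) • pt 0 0 1) :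
    (∀ i j, 1 ≤ i → i ≤ 2 * n + 1 → 1 ≤ j → j ≤ 2 * n + 1 → dist (x i) (x j) ≤ 1) ∧
    ((Finset.Icc 1 (2 * n + 1) ×ˢ Finset.Icc 1 (2 * n + 1)).filter
        (fun p => p.1 < p.2 ∧ dist (x p.1) (x p.2) = 1)).card = 4 * n :=
  stmt_4_general n heven x hbase hmid hapex
end

section
/- Let 0 < a < 1 and 0 < v < π. Set b = √(1−a²)·e₁, c = √(1−a²)·(cos v, sin v, 0), and b' = −a·e₃, and let φ = ∠(b − b', c − b') be the angle between b − b' and c − b'. Then the angle between e₂ = (0,1,0) and the vector (c − b') − cos(φ)·(b − b') equals arccos(√(1−a²)·sin(v)/sin(φ)). -/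
/-!
Both `b - b'` and `c - b'` are unit vectors, so `(c - b') - cos φ • (b - b')` is the component of
`c - b'` orthogonal to `b - b'` and has length `sin φ`. Since `b - b'` is orthogonal to `e₂`, the
inner product of `e₂` with that component is the second coordinate of `c - b'`, namely
`√(1 - a²) sin v`.
-/

open Real MeasureTheory Metric

namespace InnerProductGeometry

variable {V : Type*} [NormedAddCommGroup V] [InnerProductSpace ℝ V]

theorem angle_eq_arccos_inner_div_norm_of_norm_eq_one {x : V} (hx : ‖x‖ = 1) (y : V) :
    angle x y = arccos (inner ℝ x y / ‖y‖) := by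
  rw [angle, hx, one_mul]

theorem norm_sub_cos_angle_smul_eq_sin_angle {u w : V} (hu : ‖u‖ = 1) (hw : ‖w‖ = 1) :
    ‖w - cos (angle u w) • u‖ = sin (angle u w) := by
  have hcos : cos (angle u w) = inner ℝ u w := by rw [cos_angle, hu, hw, mul_one, div_one]
  refine (pow_left_inj₀ (norm_nonneg _) (sin_angle_nonneg u w) two_ne_zero).mp ?_
  rw [norm_sub_sq_real, inner_smul_right, norm_smul, real_inner_comm, sin_sq, hcos,
    Real.norm_eq_abs, mul_pow, sq_abs, hu, hw]
  ring

end InnerProductGeometry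

open InnerProductGeometry

theorem pt_sub (a b c d e f : ℝ) : pt a b c - pt d e f = pt (a - d) (b - e) (c - f) := by
  ext i; fin_cases i <;> simp [pt]

theorem inner_pt (a b c d e f : ℝ) :
    inner ℝ (pt a b c) (pt d e f) = a * d + b * e + c * f := by
  simp [pt, PiLp.inner_apply, Fin.sum_univ_three]; ring

theorem norm_pt (a b c : ℝ) : ‖pt a b c‖ = √(a ^ 2 + b ^ 2 + c ^ 2) := by
  rw [norm_eq_sqrt_real_inner, inner_pt]; ring_nf

theorem norm_pt_eq_one {a b c : ℝ} (h : a ^ 2 + b ^ 2 + c ^ 2 = 1) : ‖pt a b c‖ = 1 := by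
  rw [norm_pt, h, sqrt_one]

theorem stmt_7_general (a v : ℝ) (ha0 : 0 < a) (ha1 : a < 1)
    (b c b' : EuclideanSpace ℝ (Fin 3))
    (hb : b = pt (Real.sqrt (1 - a ^ 2)) 0 0)
    (hc : c = pt (Real.sqrt (1 - a ^ 2) * Real.cos v) (Real.sqrt (1 - a ^ 2) * Real.sin v) 0)
    (hb' : b' = pt 0 0 (-a))
    (φ : ℝ) (hφ : φ = InnerProductGeometry.angle (b - b') (c - b')) :
    InnerProductGeometry.angle (pt 0 1 0) ((c - b') - Real.cos φ • (b - b')) =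
      Real.arccos (Real.sqrt (1 - a ^ 2) * Real.sin v / Real.sin φ) := by
  set s := √(1 - a ^ 2)
  have hs : s ^ 2 = 1 - a ^ 2 := sq_sqrt (by nlinarith)
  have hbb : b - b' = pt s 0 a := by rw [hb, hb', pt_sub]; simp
  have hcb : c - b' = pt (s * cos v) (s * sin v) a := by rw [hc, hb', pt_sub]; simp
  have hu : ‖b - b'‖ = 1 := by rw [hbb]; exact norm_pt_eq_one (by linear_combination hs)
  have hw : ‖c - b'‖ = 1 := by
    rw [hcb]; exact norm_pt_eq_one (by linear_combination s ^ 2 * sin_sq_add_cos_sq v + hs)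
  rw [angle_eq_arccos_inner_div_norm_of_norm_eq_one (norm_pt_eq_one (by norm_num)), hφ,
    norm_sub_cos_angle_smul_eq_sin_angle hu hw, inner_sub_right, inner_smul_right, hbb, hcb,
    inner_pt, inner_pt]
  ring_nf

/-- The exterior angle between the horizontal circle and the geodesic of the unit sphere
centered at `b'` joining `b` and `c`. -/
theorem stmt_7 (a v : ℝ) (ha0 : 0 < a) (ha1 : a < 1) (hv0 : 0 < v) (hv : v < π)
    (b c b' : EuclideanSpace ℝ (Fin 3))
    (hb : b = pt (Real.sqrt (1 - a ^ 2)) 0 0)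
    (hc : c = pt (Real.sqrt (1 - a ^ 2) * Real.cos v) (Real.sqrt (1 - a ^ 2) * Real.sin v) 0)
    (hb' : b' = pt 0 0 (-a))
    (φ : ℝ) (hφ : φ = InnerProductGeometry.angle (b - b') (c - b')) :
    InnerProductGeometry.angle (pt 0 1 0) ((c - b') - Real.cos φ • (b - b')) =
      Real.arccos (Real.sqrt (1 - a ^ 2) * Real.sin v / Real.sin φ) :=
  stmt_7_general a v ha0 ha1 b c b' hb hc hb' φ hφ
end

section
/- Let n ≥ 3 be an odd integer and t ∈ (0,1). With the elongated pyramid points x_j = (cos(2πj/n)/(2cos(π/(2n))), sin(2πj/n)/(2cos(π/(2n))), 0) for j = 1,…,n and x_{n+i} = t·x_i − α·e₃ for i = 1,…,n, where α = √(1 − (t² + 1 + 2t·cos(π/n))/(2cos(π/(2n)))²), one has |x_j − x_{n+i}|² = 1 − 2t·(cos(2π(i−j)/n) + cos(π/n))/(2cos(π/(2n)))² for all i, j ∈ {1,…,n}. -/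
open Real MeasureTheory Metric

/-- Squared distances between base vertices and middle-layer vertices of the elongated pyramid. -/
theorem stmt_18 (n : ℕ) (hn : 3 ≤ n) (hodd : Odd n) (t : ℝ) (ht : t ∈ Set.Ioo (0:ℝ) 1)
    (α : ℝ)
    (hα : α = Real.sqrt (1 - (t ^ 2 + 1 + 2 * t * Real.cos (π / n)) / (2 * Real.cos (π / (2 * n))) ^ 2))
    (x : ℕ → EuclideanSpace ℝ (Fin 3))
    (hbase : ∀ j, 1 ≤ j → j ≤ n →
      x j = pt (Real.cos (2 * π * j / n) / (2 * Real.cos (π / (2 * n))))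
               (Real.sin (2 * π * j / n) / (2 * Real.cos (π / (2 * n)))) 0)
    (hmid : ∀ i, 1 ≤ i → i ≤ n → x (n + i) = t • x i - α • pt 0 0 1) :
    ∀ i j, 1 ≤ i → i ≤ n → 1 ≤ j → j ≤ n →
      dist (x j) (x (n + i)) ^ 2 =
        1 - 2 * t * (Real.cos (2 * π * ((i : ℝ) - j) / n) + Real.cos (π / n))
              / (2 * Real.cos (π / (2 * n))) ^ 2 := by
  intro i j hi1 hin hj1 hjn
  obtain ⟨ht0, ht1⟩ := ht
  have hn0 : (0:ℝ) < n := by positivity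
  have hnn : (n:ℝ) ≠ 0 := ne_of_gt hn0
  have hn3 : (3:ℝ) ≤ n := by exact_mod_cast hn
  have hpi := Real.pi_pos
  -- cos (π/(2n)) > 0
  have hc : 0 < Real.cos (π / (2 * n)) := by
    apply Real.cos_pos_of_mem_Ioo
    constructor
    · have : 0 < π / (2 * (n:ℝ)) := by positivity
      linarith
    · rw [div_lt_div_iff₀ (by linarith) (by norm_num)]
      nlinarith
  -- cos (π/n) > 0
  have hcn : 0 < Real.cos (π / n) := by
    apply Real.cos_pos_of_mem_Ioo
    constructor
    · have : 0 < π / (n:ℝ) := by positivity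
      linarith
    · rw [div_lt_div_iff₀ hn0 (by norm_num)]
      nlinarith
  have hc0 : (2 * Real.cos (π / (2 * n))) ≠ 0 := by positivity
  -- double angle: cos(π/n) = 2 cos(π/(2n))^2 - 1
  have hdouble : Real.cos (π / n) = 2 * Real.cos (π / (2 * n)) ^ 2 - 1 := by
    have : π / n = 2 * (π / (2 * n)) := by field_simp
    rw [this, Real.cos_two_mul]
  -- radicand nonneg
  have hrad : 0 ≤ 1 - (t ^ 2 + 1 + 2 * t * Real.cos (π / n)) / (2 * Real.cos (π / (2 * n))) ^ 2 := by
    rw [sub_nonneg, div_le_one (by positivity)]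
    nlinarith
  have hα2 : α ^ 2 = 1 - (t ^ 2 + 1 + 2 * t * Real.cos (π / n)) / (2 * Real.cos (π / (2 * n))) ^ 2 := by
    rw [hα, Real.sq_sqrt hrad]
  -- trig identities
  have h1 : Real.cos (2 * π * j / n) ^ 2 + Real.sin (2 * π * j / n) ^ 2 = 1 :=
    Real.cos_sq_add_sin_sq _
  have h2 : Real.cos (2 * π * i / n) ^ 2 + Real.sin (2 * π * i / n) ^ 2 = 1 :=
    Real.cos_sq_add_sin_sq _
  have h3 : Real.cos (2 * π * ((i : ℝ) - j) / n) =
      Real.cos (2 * π * i / n) * Real.cos (2 * π * j / n) +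
        Real.sin (2 * π * i / n) * Real.sin (2 * π * j / n) := by
    have harg : 2 * π * ((i : ℝ) - j) / n = 2 * π * i / n - 2 * π * j / n := by ring
    rw [harg, Real.cos_sub]
  rw [hmid i hi1 hin, hbase j hj1 hjn, hbase i hi1 hin]
  have hpt0 : ∀ a b c : ℝ, pt a b c 0 = a := fun _ _ _ => rfl
  have hpt1 : ∀ a b c : ℝ, pt a b c 1 = b := fun _ _ _ => rfl
  have hpt2 : ∀ a b c : ℝ, pt a b c 2 = c := fun _ _ _ => rfl
  rw [EuclideanSpace.dist_eq, Real.sq_sqrt (by positivity)]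
  simp only [Fin.sum_univ_three, PiLp.smul_apply, PiLp.sub_apply, hpt0, hpt1, hpt2,
    smul_eq_mul, Real.dist_eq, sq_abs]
  linear_combination (h1 + t ^ 2 * h2 + 2 * t * h3) / (2 * Real.cos (π / (2 * (n:ℝ)))) ^ 2 + hα2
end
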